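/- arXiv:math/9809121 — 4 statements merged into one kernel-verified Lean document; each statement's English description precedes it below -/
import Mathlib

section
/- If M and N are finitely generated modules over a commutative Noetherian ring R given by two projective presentations of the same module M, then the Auslander duals computed from the two presentations are projectively equivalent; i.e., if P1 → P0 → M → 0 and Q1 → Q0 → M → 0 are projective presentations with induced maps u and v, then Coker(u*) ⊕ P ≅ Coker(v*) ⊕ Q for some finitely generated projective modules P, Q. -/
open CategoryTheory

universe u

variable (R : Type u) [CommRing R]

/-- The `i`-th Ext module of two modules, as an object of `ModuleCat R`. -/
noncomputable def extM (M N : ModuleCat.{u} R) (i : ℕ) : ModuleCat.{u} R :=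
  ((Ext R (ModuleCat.{u} R) i).obj (Opposite.op M)).obj N

/-- `D` is an Auslander dual of `M`: `D ≅ Coker(u* : P0* → P1*)` for some finite projective
presentation `P1 →u P0 → M → 0`. -/
def IsAuslanderDual (M D : ModuleCat.{u} R) : Prop :=
  ∃ (P1 P0 : ModuleCat.{u} R) (uu : P1 →ₗ[R] P0) (f : P0 →ₗ[R] M),
    Module.Finite R P1 ∧ Module.Projective R P1 ∧
    Module.Finite R P0 ∧ Module.Projective R P0 ∧
    Function.Surjective f ∧ Function.Exact uu f ∧
    Nonempty (D ≃ₗ[R] (Module.Dual R P1 ⧸ LinearMap.range uu.dualMap))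

/-- Gorenstein dimension zero: reflexive with all positive Ext of `M` and `M*` into `R`
vanishing. -/
def GdimZero (M : ModuleCat.{u} R) : Prop :=
  Module.IsReflexive R M ∧ ∀ i : ℕ, 1 ≤ i →
    Subsingleton (extM R M (ModuleCat.of R R) i) ∧
    Subsingleton (extM R (ModuleCat.of R (Module.Dual R M)) (ModuleCat.of R R) i)

/-- `GdimLE R k M` : the Gorenstein dimension of `M` is at most `k`. -/
def GdimLE : ℕ → ModuleCat.{u} R → Prop
  | 0, M => GdimZero R M
  | (k+1), M => ∃ (N : ModuleCat.{u} R) (f : N →ₗ[R] M),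
      Function.Surjective f ∧ GdimZero R N ∧
      GdimLE k (ModuleCat.of R (LinearMap.ker f))

/-- The Gorenstein dimension, as an extended natural number. -/
noncomputable def gdim (M : ModuleCat.{u} R) : ℕ∞ :=
  sInf {n : ℕ∞ | ∃ k : ℕ, n = k ∧ GdimLE R k M}

/-- `PdLE R k M` : projective dimension at most `k` (via finite projective resolutions). -/
def PdLE : ℕ → ModuleCat.{u} R → Prop
  | 0, M => Module.Projective R M
  | (k+1), M => ∃ (P : ModuleCat.{u} R) (f : P →ₗ[R] M),
      Module.Finite R P ∧ Module.Projective R P ∧ Function.Surjective f ∧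
      PdLE k (ModuleCat.of R (LinearMap.ker f))

noncomputable def pd (M : ModuleCat.{u} R) : ℕ∞ :=
  sInf {n : ℕ∞ | ∃ k : ℕ, n = k ∧ PdLE R k M}

/-- `M` is a `k`-th syzygy: there is an exact sequence `0 → M → P₀ → ⋯ → P_{k-1}` with all
`P_j` finitely generated projective. -/
def IsSyzygy : ℕ → ModuleCat.{u} R → Prop
  | 0, _ => True
  | (k+1), M => ∃ (P : ModuleCat.{u} R) (f : M →ₗ[R] P),
      Module.Finite R P ∧ Module.Projective R P ∧ Function.Injective f ∧
      IsSyzygy k (ModuleCat.of R (P ⧸ LinearMap.range f))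

/-- `M` is `k`-torsionless: `Ext^i(D(M), R) = 0` for `1 ≤ i ≤ k`. -/
def Torsionless (k : ℕ) (M : ModuleCat.{u} R) : Prop :=
  ∃ D : ModuleCat.{u} R, IsAuslanderDual R M D ∧
    ∀ i : ℕ, 1 ≤ i → i ≤ k → Subsingleton (extM R D (ModuleCat.of R R) i)

/-- The depth of a module over a local ring, via vanishing of `Ext^i(k, M)`. -/
noncomputable def rdepth (A : Type u) [CommRing A] [IsLocalRing A] (N : ModuleCat.{u} A) : ℕ∞ :=
  sInf {n : ℕ∞ | ∃ i : ℕ, n = i ∧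
    ¬ Subsingleton (extM A (ModuleCat.of A (IsLocalRing.ResidueField A)) N i)}

/-- Injective dimension at most `k`. -/
def IdLE : ℕ → ModuleCat.{u} R → Prop
  | 0, M => Module.Injective R M
  | (k+1), M => ∃ (I : ModuleCat.{u} R) (f : M →ₗ[R] I),
      Module.Injective R I ∧ Function.Injective f ∧
      IdLE k (ModuleCat.of R (I ⧸ LinearMap.range f))

/-!
Schanuel's trick, applied twice and then dualised. Adding identities, the two presentations
become `u ⊕ 1 : P₁ ⊕ Q₀ → P₀ ⊕ Q₀` and `v ⊕ 1 : Q₁ ⊕ P₀ → Q₀ ⊕ P₀`, and their augmentations to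
`M` differ by an isomorphism `α : P₀ ⊕ Q₀ ≅ Q₀ ⊕ P₀` built from lifts of `f` through `g` and of
`g` through `f`. Then `α ∘ (u ⊕ 1)` and `v ⊕ 1` have the same image, and the same construction,
now lifting through that image, makes `(u ⊕ 1) ∘ pr₁` and `(v ⊕ 1) ∘ pr₁` isomorphic as arrows.
The cokernel of the dual map is invariant under isomorphisms of arrows, vanishes on identities
and turns `w ∘ pr₁ : X ⊕ Y → Z` into `Coker w* ⊕ Y*`, which gives
`Coker u* ⊕ (Q₁ ⊕ P₀)* ≅ Coker v* ⊕ (P₁ ⊕ Q₀)*`.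
-/

open Module LinearMap

noncomputable section

variable {R : Type*} [CommRing R] {X Y Z W X' Z' M : Type*}
  [AddCommGroup X] [Module R X] [AddCommGroup Y] [Module R Y] [AddCommGroup Z] [Module R Z]
  [AddCommGroup W] [Module R W] [AddCommGroup X'] [Module R X'] [AddCommGroup Z'] [Module R Z']
  [AddCommGroup M] [Module R M]

theorem Function.Exact.prodMap_id_comp_fst {u : X →ₗ[R] Z} {f : Z →ₗ[R] M}
    (h : Function.Exact u f) :
    Function.Exact (u.prodMap (LinearMap.id : Y →ₗ[R] Y)) (f ∘ₗ fst R Z Y) := by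
  rw [LinearMap.exact_iff, ker_comp, h.linearMap_ker_eq, range_prodMap, range_id,
    Submodule.comap_fst]

theorem Module.Projective.exists_comp_eq_of_range_le [Projective R X] {f : X →ₗ[R] M}
    {g : Y →ₗ[R] M} (hfg : range f ≤ range g) : ∃ h : X →ₗ[R] Y, g ∘ₗ h = f := by
  obtain ⟨h, hh⟩ := projective_lifting_property g.rangeRestrict
    (f.codRestrict _ fun x ↦ hfg (mem_range_self f x)) g.surjective_rangeRestrict
  exact ⟨h, LinearMap.ext fun x ↦ congr_arg Subtype.val (LinearMap.congr_fun hh x)⟩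

theorem exists_linearEquiv_prod_comp_fst_eq [Projective R X] [Projective R Y]
    {f : X →ₗ[R] M} {g : Y →ₗ[R] M} (hfg : range f = range g) :
    ∃ e : (X × Y) ≃ₗ[R] (Y × X), (g ∘ₗ fst R Y X) ∘ₗ e = f ∘ₗ fst R X Y := by
  obtain ⟨h, hh⟩ := Projective.exists_comp_eq_of_range_le hfg.le
  obtain ⟨k, hk⟩ := Projective.exists_comp_eq_of_range_le hfg.ge
  let e : (X × Y) ≃ₗ[R] (Y × X) := LinearEquiv.ofLinearMap
    ((h ∘ₗ (fst R X Y - k ∘ₗ snd R X Y) + snd R X Y).prod (fst R X Y - k ∘ₗ snd R X Y))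
    ((snd R Y X + k ∘ₗ (fst R Y X - h ∘ₗ snd R Y X)).prod (fst R Y X - h ∘ₗ snd R Y X))
    (by ext <;> simp) (by ext <;> simp)
  refine ⟨e, LinearMap.ext fun ⟨x, y⟩ ↦ ?_⟩
  change g (h (x - k y) + y) = f x
  rw [map_add, ← LinearMap.comp_apply g h, hh, ← hk, LinearMap.comp_apply, ← map_add,
    sub_add_cancel]

def Submodule.quotientProd (p : Submodule R X) (q : Submodule R Y) :
    ((X × Y) ⧸ p.prod q) ≃ₗ[R] (X ⧸ p) × (Y ⧸ q) :=
  (quotEquivOfEq _ _ (by rw [ker_prodMap, ker_mkQ, ker_mkQ])).trans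
    ((p.mkQ.prodMap q.mkQ).quotKerEquivOfSurjective
      (p.mkQ_surjective.prodMap q.mkQ_surjective))

theorem LinearMap.range_dualMap_prodMap (w : X →ₗ[R] Z) (w' : Y →ₗ[R] W) :
    range (w.prodMap w').dualMap =
      ((range w.dualMap).prod (range w'.dualMap)).map
        (dualProdDualEquivDual R X Y : _ →ₗ[R] _) := by
  have hcomm : (w.prodMap w').dualMap ∘ₗ (dualProdDualEquivDual R Z W).toLinearMap =
      (dualProdDualEquivDual R X Y).toLinearMap ∘ₗ w.dualMap.prodMap w'.dualMap := by
    ext φ x <;> simp [dualProdDualEquivDual_apply]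
  rw [← range_comp_of_range_eq_top _ (range_eq_top.2 (dualProdDualEquivDual R Z W).surjective),
    hcomm, range_comp, range_prodMap]

abbrev DualCoker (w : X →ₗ[R] Z) : Type _ := Dual R X ⧸ range w.dualMap

namespace DualCoker

def congr {w : X →ₗ[R] Z} {w' : X' →ₗ[R] Z'} (e₁ : X ≃ₗ[R] X') (e₂ : Z ≃ₗ[R] Z')
    (h : e₂.toLinearMap ∘ₗ w = w' ∘ₗ e₁.toLinearMap) :
    DualCoker w ≃ₗ[R] DualCoker w' :=
  (Submodule.Quotient.equiv _ _ e₁.dualMap (by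
    rw [← range_comp]
    change range (e₁.toLinearMap.dualMap ∘ₗ w'.dualMap) = _
    rw [dualMap_comp_dualMap, ← h, ← dualMap_comp_dualMap]
    exact range_comp_of_range_eq_top _ (range_eq_top.2 e₂.dualMap.surjective))).symm

def prodMapEquiv (w : X →ₗ[R] Z) (w' : Y →ₗ[R] W) :
    DualCoker (w.prodMap w') ≃ₗ[R] DualCoker w × DualCoker w' :=
  (Submodule.Quotient.equiv _ _ _ (range_dualMap_prodMap w w').symm).symm.trans
    (Submodule.quotientProd _ _)

def compFstEquiv (w : X →ₗ[R] Z) :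
    DualCoker (w ∘ₗ fst R X Y) ≃ₗ[R] DualCoker w × Dual R Y :=
  (congr (LinearEquiv.refl R _) (LinearEquiv.prodUnique (M := Z) (M₂ := PUnit)).symm
      (w' := w.prodMap (0 : Y →ₗ[R] PUnit)) (by ext <;> simp)).trans <|
    (prodMapEquiv w 0).trans <|
    LinearEquiv.prodCongr (LinearEquiv.refl R _)
      (Submodule.quotEquivOfEqBot _ (range_eq_bot.2 (by ext φ; exact φ.map_zero)))

def prodMapIdEquiv (w : X →ₗ[R] Z) :
    DualCoker (w.prodMap (LinearMap.id : Y →ₗ[R] Y)) ≃ₗ[R] DualCoker w :=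
  (prodMapEquiv w LinearMap.id).trans <|
    (LinearEquiv.prodCongr (LinearEquiv.refl R _) (Submodule.quotEquivOfEq _ ⊤ (by simp))).trans
      LinearEquiv.prodUnique

end DualCoker

end

theorem auslander_dual_unique_up_to_projective_equivalence_general
    (R : Type u) [CommRing R]
    (M P1 P0 Q1 Q0 : ModuleCat.{u} R)
    [Module.Finite R P1] [Module.Finite R P0] [Module.Finite R Q1] [Module.Finite R Q0]
    (hP1 : Module.Projective R P1) (hP0 : Module.Projective R P0)
    (hQ1 : Module.Projective R Q1) (hQ0 : Module.Projective R Q0)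
    (u1 : P1 →ₗ[R] P0) (f : P0 →ₗ[R] M) (v1 : Q1 →ₗ[R] Q0) (g : Q0 →ₗ[R] M)
    (hf : Function.Surjective f) (huf : Function.Exact u1 f)
    (hg : Function.Surjective g) (hvg : Function.Exact v1 g) :
    ∃ (P Q : ModuleCat.{u} R), Module.Finite R P ∧ Module.Projective R P ∧
      Module.Finite R Q ∧ Module.Projective R Q ∧
      Nonempty ((((Module.Dual R P1) ⧸ LinearMap.range u1.dualMap) × P) ≃ₗ[R]
        (((Module.Dual R Q1) ⧸ LinearMap.range v1.dualMap) × Q)) := by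
  obtain ⟨α, hα⟩ := exists_linearEquiv_prod_comp_fst_eq (f := f) (g := g)
    (by rw [range_eq_top.2 hf, range_eq_top.2 hg])
  have hrange : range (α.toLinearMap ∘ₗ u1.prodMap (LinearMap.id : Q0 →ₗ[R] Q0)) =
      range (v1.prodMap (LinearMap.id : P0 →ₗ[R] P0)) := by
    have hαsymm : (f ∘ₗ fst R P0 Q0) ∘ₗ α.symm.toLinearMap = g ∘ₗ fst R Q0 P0 := by
      rw [← hα]; ext <;> simp
    rw [← hvg.prodMap_id_comp_fst.linearMap_ker_eq, ← hαsymm,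
      ((α.conj_exact_iff_exact _ _).2 huf.prodMap_id_comp_fst).linearMap_ker_eq]
  obtain ⟨β, hβ⟩ := exists_linearEquiv_prod_comp_fst_eq hrange
  refine ⟨.of R (Dual R (Q1 × P0)), .of R (Dual R (P1 × Q0)), inferInstance, inferInstance,
    inferInstance, inferInstance, ⟨?_⟩⟩
  exact (LinearEquiv.prodCongr (DualCoker.prodMapIdEquiv u1).symm (LinearEquiv.refl R _)).trans <|
    (DualCoker.compFstEquiv _).symm.trans <|
    (DualCoker.congr β α (by rw [hβ]; rfl)).trans <|
    (DualCoker.compFstEquiv _).trans <|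
    LinearEquiv.prodCongr (DualCoker.prodMapIdEquiv v1) (LinearEquiv.refl R _)

/-- Uniqueness of the Auslander dual up to projective equivalence. -/
theorem auslander_dual_unique_up_to_projective_equivalence
    (R : Type u) [CommRing R] [IsNoetherianRing R]
    (M P1 P0 Q1 Q0 : ModuleCat.{u} R) [Module.Finite R M]
    [Module.Finite R P1] [Module.Finite R P0] [Module.Finite R Q1] [Module.Finite R Q0]
    (hP1 : Module.Projective R P1) (hP0 : Module.Projective R P0)
    (hQ1 : Module.Projective R Q1) (hQ0 : Module.Projective R Q0)
    (u1 : P1 →ₗ[R] P0) (f : P0 →ₗ[R] M) (v1 : Q1 →ₗ[R] Q0) (g : Q0 →ₗ[R] M)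
    (hf : Function.Surjective f) (huf : Function.Exact u1 f)
    (hg : Function.Surjective g) (hvg : Function.Exact v1 g) :
    ∃ (P Q : ModuleCat.{u} R), Module.Finite R P ∧ Module.Projective R P ∧
      Module.Finite R Q ∧ Module.Projective R Q ∧
      Nonempty ((((Module.Dual R P1) ⧸ LinearMap.range u1.dualMap) × P) ≃ₗ[R]
        (((Module.Dual R Q1) ⧸ LinearMap.range v1.dualMap) × Q)) :=
  auslander_dual_unique_up_to_projective_equivalence_general R M P1 P0 Q1 Q0 hP1 hP0 hQ1 hQ0 u1 f v1
    g hf huf hg hvg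
end

section
/- For a finitely generated module M over a commutative Noetherian ring R, with Auslander dual D(M) computed from a projective presentation, there are natural isomorphisms Ker(σ_M) ≅ Ext¹_R(D(M), R) and Coker(σ_M) ≅ Ext²_R(D(M), R), where σ_M : M → M** is the natural evaluation map. -/
open CategoryTheory

universe u

variable (R : Type u) [CommRing R]

/-!
Splicing `0 → M* → P₀* → P₁* → D(M) → 0` (exact because `Hom(-, R)` is left exact) with a
projective resolution `Q` of `M*` gives a projective resolution `⋯ → Q₁ → Q₀ → P₀* → P₁*` of
`D(M)`. Dualising it and identifying `Pᵢ**` with `Pᵢ` (finite projective modules are reflexive),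
`Ext¹(D(M), R)` is the homology of `P₁ → P₀ → Q₀*`, which `f` maps onto `Ker σ_M` since `Q₀ → M*`
is onto, and `Ext²(D(M), R)` is the homology of `P₀ → Q₀* → Q₁*`, whose cycles are `M**` by left
exactness of `Hom(-, R)` and whose boundaries are the image of `σ_M ∘ f`.
-/

universe v

namespace CategoryTheory.ProjectiveResolution

variable {C : Type*} [Category.{v} C] [Abelian C]

section

variable {X : C} (Q : ProjectiveResolution X)

noncomputable def augmentation : Q.complex.X 0 ⟶ X :=
  (ChainComplex.toSingle₀Equiv _ _ Q.π).1

@[simp]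
lemma d_comp_augmentation : Q.complex.d 1 0 ≫ Q.augmentation = 0 :=
  (ChainComplex.toSingle₀Equiv _ _ Q.π).2

@[simp]
lemma d_comp_augmentation_comp {Y : C} (i : X ⟶ Y) :
    Q.complex.d 1 0 ≫ Q.augmentation ≫ i = 0 := by
  rw [← Category.assoc, d_comp_augmentation, Limits.zero_comp]

instance : Epi Q.augmentation :=
  inferInstanceAs (Epi (Q.π.f 0))

lemma exact_augmentation : (ShortComplex.mk _ _ Q.d_comp_augmentation).Exact :=
  Q.exact₀

lemma exact_d_augmentation_comp {Y : C} (i : X ⟶ Y) [Mono i] :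
    (ShortComplex.mk (Q.complex.d 1 0) (Q.augmentation ≫ i) (by simp)).Exact :=
  (ShortComplex.exact_iff_of_epi_of_isIso_of_mono
    (S₁ := ShortComplex.mk _ _ Q.d_comp_augmentation)
    (S₂ := ShortComplex.mk (Q.complex.d 1 0) (Q.augmentation ≫ i) (by simp))
    ⟨𝟙 _, 𝟙 _, i, by simp, by simp⟩).1 Q.exact_augmentation

lemma exact_augmentation_comp {Y Z : C} {i : X ⟶ Y} {p : Y ⟶ Z} (hip : i ≫ p = 0)
    (h : (ShortComplex.mk i p hip).Exact) :
    (ShortComplex.mk (Q.augmentation ≫ i) p (by simp [hip])).Exact :=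
  (ShortComplex.exact_iff_of_epi_of_isIso_of_mono
    (S₁ := ShortComplex.mk (Q.augmentation ≫ i) p (by simp [hip]))
    (S₂ := ShortComplex.mk i p hip)
    ⟨Q.augmentation, 𝟙 _, 𝟙 _, by simp, by simp⟩).2 h

end

noncomputable def ofShortExact {S : ShortComplex C} (hS : S.ShortExact) [Projective S.X₂]
    (Q : ProjectiveResolution S.X₁) : ProjectiveResolution S.X₃ where
  complex := Q.complex.augment (Q.augmentation ≫ S.f) (by simp)
  projective
    | 0 => by dsimp; infer_instance
    | n + 1 => by dsimp; infer_instance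
  π := (ChainComplex.toSingle₀Equiv _ _).symm ⟨S.g, by simp; rfl⟩
  quasiIso := ⟨fun
    | 0 => by
      rw [ChainComplex.quasiIsoAt₀_iff, ShortComplex.quasiIso_iff_of_zeros' _ rfl rfl rfl]
      refine (ShortComplex.exact_and_epi_g_iff_of_iso ?_).2
        ⟨Q.exact_augmentation_comp S.zero hS.exact, hS.epi_g⟩
      -- `π.f 0` is `S.g` only up to the identification `((single₀ C).obj S.X₃).X 0 = S.X₃`
      refine ShortComplex.isoMk (Iso.refl _) (Iso.refl _) (Iso.refl _)
        ((Category.id_comp _).trans (Category.comp_id _).symm)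
        ((Category.id_comp _).trans (Eq.trans ?_ (Category.comp_id _).symm))
      exact (ChainComplex.toSingle₀Equiv_symm_apply_f_zero
        (C := Q.complex.augment (Q.augmentation ≫ S.f) (by simp)) S.g (by simp; rfl)).symm
    | 1 => by
      rw [quasiIsoAt_iff_exactAt' _ _ (ChainComplex.exactAt_succ_single_obj _ _),
        HomologicalComplex.exactAt_iff' _ 2 1 0 (by simp) (by simp)]
      have := hS.mono_f
      exact Q.exact_d_augmentation_comp S.f
    | n + 2 => by
      rw [quasiIsoAt_iff_exactAt' _ _ (ChainComplex.exactAt_succ_single_obj _ _),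
        HomologicalComplex.exactAt_iff' _ (n + 3) (n + 2) (n + 1) (by simp) (by simp)]
      have := Q.complex_exactAt_succ n
      rwa [HomologicalComplex.exactAt_iff' _ (n + 2) (n + 1) n (by simp) (by simp)] at this⟩

end CategoryTheory.ProjectiveResolution

open Module LinearMap

variable {R}

lemma dualMap_comp_dualMap_eq_zero {X Y Z : Type*} [AddCommGroup X] [Module R X]
    [AddCommGroup Y] [Module R Y] [AddCommGroup Z] [Module R Z] {g : X →ₗ[R] Y} {h : Y →ₗ[R] Z}
    (hgh : h ∘ₗ g = 0) : g.dualMap ∘ₗ h.dualMap = 0 := by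
  rw [dualMap_comp_dualMap, hgh]
  ext; simp

lemma ChainComplex.dualMap_d_comp_dualMap_d (C : ChainComplex (ModuleCat.{u} R) ℕ) (i j k : ℕ) :
    (C.d k j).hom.dualMap ∘ₗ (C.d j i).hom.dualMap = 0 :=
  dualMap_comp_dualMap_eq_zero (by rw [← ModuleCat.hom_comp, C.d_comp_d, ModuleCat.hom_zero])

noncomputable def ChainComplex.linearYonedaObjScIsoDualMap (C : ChainComplex (ModuleCat.{u} R) ℕ)
    (i j k : ℕ) :
    (C.linearYonedaObj R (ModuleCat.of R R)).sc' i j k ≅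
      ShortComplex.moduleCatMk (C.d j i).hom.dualMap (C.d k j).hom.dualMap
        (C.dualMap_d_comp_dualMap_d i j k) :=
  ShortComplex.isoMk ModuleCat.homLinearEquiv.toModuleIso ModuleCat.homLinearEquiv.toModuleIso
    ModuleCat.homLinearEquiv.toModuleIso rfl rfl

noncomputable def CategoryTheory.ProjectiveResolution.extSuccIsoHomologyDualMap
    {X : ModuleCat.{u} R} (P : ProjectiveResolution X) (n : ℕ) :
    extM R X (ModuleCat.of R R) (n + 1) ≅
      (ShortComplex.moduleCatMk (P.complex.d (n + 1) n).hom.dualMap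
        (P.complex.d (n + 2) (n + 1)).hom.dualMap
        (P.complex.dualMap_d_comp_dualMap_d _ _ _)).homology :=
  P.isoExt (n + 1) _ ≪≫
    (P.complex.linearYonedaObj R (ModuleCat.of R R)).homologyIsoSc' n (n + 1) (n + 2)
      (by simp) (by simp) ≪≫
    ShortComplex.homologyMapIso (P.complex.linearYonedaObjScIsoDualMap n (n + 1) (n + 2))

noncomputable def CategoryTheory.ShortComplex.moduleCatMkHomologyLinearEquiv
    {X₁ X₂ X₃ : Type u} [AddCommGroup X₁] [Module R X₁] [AddCommGroup X₂] [Module R X₂]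
    [AddCommGroup X₃] [Module R X₃] {g : X₁ →ₗ[R] X₂} {h : X₂ →ₗ[R] X₃} (hgh : h ∘ₗ g = 0)
    {B W : Type*} [AddCommGroup B] [Module R B] [AddCommGroup W] [Module R W]
    (ι : B →ₗ[R] X₂) (hι : range ι = ker h)
    (π : B →ₗ[R] W) (hπ : Function.Surjective π) (hker : ker π = (range g).comap ι) :
    (ShortComplex.moduleCatMk g h hgh).homology ≃ₗ[R] W :=
  let S := ShortComplex.moduleCatMk g h hgh
  let ι' : B →ₗ[R] ker S.g.hom := ι.codRestrict _ fun b => hι ▸ mem_range_self ι b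
  let q := (range S.moduleCatToCycles).mkQ ∘ₗ ι'
  have hq : Function.Surjective q := (Submodule.mkQ_surjective _).comp fun ⟨x, hx⟩ => by
    obtain ⟨b, rfl⟩ : x ∈ range ι := hι ▸ hx
    exact ⟨b, rfl⟩
  have hkerq : ker q = ker π := by
    ext b
    rw [mem_ker, hker, Submodule.mem_comap]
    show Submodule.Quotient.mk (ι' b) = 0 ↔ _
    simp only [Submodule.Quotient.mk_eq_zero, mem_range, Subtype.ext_iff]
    rfl
  S.moduleCatHomologyIso.toLinearEquiv ≪≫ₗ (q.quotKerEquivOfSurjective hq).symm ≪≫ₗ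
    Submodule.quotEquivOfEq _ _ hkerq ≪≫ₗ π.quotKerEquivOfSurjective hπ

lemma Submodule.shortExact_subtype_mkQ {X : Type u} [AddCommGroup X] [Module R X]
    (N : Submodule R X) :
    (ShortComplex.mk (ModuleCat.ofHom N.subtype) (ModuleCat.ofHom N.mkQ)
      (by ext; simp)).ShortExact :=
  ModuleCat.shortComplex_shortExact _ (exact_subtype_mkQ N) N.injective_subtype N.mkQ_surjective

section AuslanderDual

variable {P₁ P₀ M Q₀ Q₁ : Type u}
  [AddCommGroup P₁] [Module R P₁] [AddCommGroup P₀] [Module R P₀] [AddCommGroup M] [Module R M]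
  [AddCommGroup Q₀] [Module R Q₀] [AddCommGroup Q₁] [Module R Q₁]
  {u : P₁ →ₗ[R] P₀} {f : P₀ →ₗ[R] M} {ε : Q₀ →ₗ[R] Dual R M}

lemma Function.Exact.dualMap (huf : Function.Exact u f) (hf : Function.Surjective f) :
    Function.Exact f.dualMap u.dualMap :=
  exact_lcomp_of_exact_of_surjective R huf hf

lemma shortExact_dualMap_rangeRestrict (huf : Function.Exact u f) (hf : Function.Surjective f) :
    (ShortComplex.mk (ModuleCat.ofHom f.dualMap)
      (ModuleCat.ofHom (Y := range u.dualMap) u.dualMap.rangeRestrict)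
      (by ext; simp [(huf.dualMap hf).apply_apply_eq_zero])).ShortExact :=
  ModuleCat.shortComplex_shortExact _
    (fun φ => (Submodule.mk_eq_zero _ _).trans (huf.dualMap hf φ))
    (dualMap_injective_of_surjective hf) u.dualMap.surjective_rangeRestrict

noncomputable def auslanderResolution [Module.Finite R P₀] [Module.Projective R P₀]
    [Module.Finite R P₁] [Module.Projective R P₁]
    (huf : Function.Exact u f) (hf : Function.Surjective f)
    (Q : ProjectiveResolution (ModuleCat.of R (Dual R M))) :
    ProjectiveResolution (ModuleCat.of R (Dual R P₁ ⧸ range u.dualMap)) :=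
  (Q.ofShortExact (shortExact_dualMap_rangeRestrict huf hf)).ofShortExact
    (Submodule.shortExact_subtype_mkQ _)

noncomputable def homologyDualMapEquivKerEval [IsReflexive R P₀] [IsReflexive R P₁]
    (huf : Function.Exact u f) (hf : Function.Surjective f) (hε : Function.Surjective ε) :
    (ShortComplex.moduleCatMk u.dualMap.dualMap (f.dualMap ∘ₗ ε).dualMap
      (dualMap_comp_dualMap_eq_zero (by
        rw [← comp_assoc, dualMap_comp_dualMap, huf.linearMap_comp_eq_zero]; ext; simp))).homology
      ≃ₗ[R] ker (Dual.eval R M) :=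
  ShortComplex.moduleCatMkHomologyLinearEquiv _
    (Dual.eval R P₀ ∘ₗ ((ker (Dual.eval R M)).comap f).subtype)
    (by
      ext φ
      constructor
      · rintro ⟨⟨x, hx⟩, rfl⟩
        ext q
        exact LinearMap.congr_fun hx (ε q)
      · intro hφ
        obtain ⟨x, rfl⟩ := (bijective_dual_eval R P₀).2 φ
        refine ⟨⟨x, LinearMap.ext fun μ => ?_⟩, rfl⟩
        obtain ⟨q, rfl⟩ := hε μ
        exact LinearMap.congr_fun hφ q)
    (f.restrict fun _ hx => hx)
    (fun ⟨m, hm⟩ => by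
      obtain ⟨x, rfl⟩ := hf m
      exact ⟨⟨x, hm⟩, rfl⟩)
    (by
      ext ⟨x, hx⟩
      simp only [ker_restrict, Submodule.mem_comap, Submodule.subtype_apply, mem_ker]
      constructor
      · intro h
        obtain ⟨p, rfl⟩ := (huf x).1 h
        exact ⟨Dual.eval R P₁ p, rfl⟩
      · rintro ⟨ψ, hψ⟩
        obtain ⟨p, rfl⟩ := (bijective_dual_eval R P₁).2 ψ
        have : u p = x := (bijective_dual_eval R P₀).1 hψ
        rw [← this]
        exact huf.apply_apply_eq_zero p)

noncomputable def homologyDualMapEquivCokerEval [IsReflexive R P₀] (hf : Function.Surjective f)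
    (hε : Function.Surjective ε) {d : Q₁ →ₗ[R] Q₀} (hdε : Function.Exact d ε) :
    (ShortComplex.moduleCatMk (f.dualMap ∘ₗ ε).dualMap d.dualMap
      (dualMap_comp_dualMap_eq_zero (by
        rw [comp_assoc, hdε.linearMap_comp_eq_zero, comp_zero]))).homology
      ≃ₗ[R] Dual R (Dual R M) ⧸ range (Dual.eval R M) :=
  ShortComplex.moduleCatMkHomologyLinearEquiv _ ε.dualMap
    (exact_lcomp_of_exact_of_surjective R hdε hε).linearMap_ker_eq.symm
    (range (Dual.eval R M)).mkQ (Submodule.mkQ_surjective _)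
    (by
      -- `(f* ∘ ε)* = ε* ∘ f**` with `ε*` injective, and `range f** = range (σ_M ∘ f) = range σ_M`
      rw [Submodule.ker_mkQ, ← dualMap_comp_dualMap, range_comp,
        Submodule.comap_map_eq_of_injective (dualMap_injective_of_surjective hε),
        ← range_comp_of_range_eq_top _ (range_eq_top.2 (bijective_dual_eval R P₀).2),
        Dual.eval_naturality, range_comp_of_range_eq_top _ (range_eq_top.2 hf)])

end AuslanderDual

theorem ker_coker_eval_iso_ext_auslander_dual_general
    (R : Type u) [CommRing R]
    (M P1 P0 : ModuleCat.{u} R)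
    [Module.Finite R P1] [Module.Finite R P0]
    (hP1 : Module.Projective R P1) (hP0 : Module.Projective R P0)
    (u1 : P1 →ₗ[R] P0) (f : P0 →ₗ[R] M)
    (hf : Function.Surjective f) (huf : Function.Exact u1 f) :
    Nonempty ((LinearMap.ker (Module.Dual.eval R M)) ≃ₗ[R]
      extM R (ModuleCat.of R ((Module.Dual R P1) ⧸ LinearMap.range u1.dualMap))
        (ModuleCat.of R R) 1) ∧
    Nonempty (((Module.Dual R (Module.Dual R M)) ⧸ LinearMap.range (Module.Dual.eval R M)) ≃ₗ[R]
      extM R (ModuleCat.of R ((Module.Dual R P1) ⧸ LinearMap.range u1.dualMap))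
        (ModuleCat.of R R) 2) := by
  have := hP1
  have := hP0
  let Q := ProjectiveResolution.of (ModuleCat.of R (Dual R M))
  let A := auslanderResolution huf hf Q
  have hε : Function.Surjective Q.augmentation.hom :=
    (ModuleCat.epi_iff_surjective _).1 inferInstance
  have hdε : Function.Exact (Q.complex.d 1 0).hom Q.augmentation.hom :=
    (ShortComplex.ShortExact.moduleCat_exact_iff_function_exact _).1 Q.exact_augmentation
  exact ⟨⟨(homologyDualMapEquivKerEval huf hf hε).symm ≪≫ₗ
      (A.extSuccIsoHomologyDualMap 0).toLinearEquiv.symm⟩,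
    ⟨(homologyDualMapEquivCokerEval hf hε hdε).symm ≪≫ₗ
      (A.extSuccIsoHomologyDualMap 1).toLinearEquiv.symm⟩⟩

/-- The kernel and cokernel of the evaluation map `σ_M : M → M**` are naturally
`Ext¹(D(M), R)` and `Ext²(D(M), R)`. -/
theorem ker_coker_eval_iso_ext_auslander_dual
    (R : Type u) [CommRing R] [IsNoetherianRing R]
    (M P1 P0 : ModuleCat.{u} R) [Module.Finite R M]
    [Module.Finite R P1] [Module.Finite R P0]
    (hP1 : Module.Projective R P1) (hP0 : Module.Projective R P0)
    (u1 : P1 →ₗ[R] P0) (f : P0 →ₗ[R] M)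
    (hf : Function.Surjective f) (huf : Function.Exact u1 f) :
    Nonempty ((LinearMap.ker (Module.Dual.eval R M)) ≃ₗ[R]
      extM R (ModuleCat.of R ((Module.Dual R P1) ⧸ LinearMap.range u1.dualMap))
        (ModuleCat.of R R) 1) ∧
    Nonempty (((Module.Dual R (Module.Dual R M)) ⧸ LinearMap.range (Module.Dual.eval R M)) ≃ₗ[R]
      extM R (ModuleCat.of R ((Module.Dual R P1) ⧸ LinearMap.range u1.dualMap))
        (ModuleCat.of R R) 2) :=
  ker_coker_eval_iso_ext_auslander_dual_general R M P1 P0 hP1 hP0 u1 f hf huf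
end

section
/- Over a commutative Noetherian ring R, every k-torsionless finitely generated module is a k-th syzygy; that is, there exists an exact sequence 0 → M → P0 → ⋯ → P_{k−1} with each P_j finitely generated projective. -/
open CategoryTheory

universe u

variable (R : Type u) [CommRing R]

/-!
Induction on `k`. Write `D(M) = Coker g*` for a presentation `P₁ →g P₀ →f M → 0`, and resolve it
by `P₁* ← P₀* ← Q`, where `Q` is any projective resolution of `Ker g* = Im f*`.
`Ext¹(D(M), R) = 0` says that every functional on `P₀**` vanishing on `Im f*` factors through
`P₁**`; since `P₀` and `P₁` are reflexive, this makes `M → M**` injective. Now `M* ⊆ P₀*` is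
finitely generated, and a surjection `Rⁿ → M*` dualizes to an embedding `j : M → (Rⁿ)*` with `j*`
surjective. Then `P₀ → (Rⁿ)* → Coker j → 0` is a presentation with `Im (j f)* = Im f*`, so its
transpose is resolved by the same resolution shifted by one, and
`Extⁱ(D(Coker j), R) ≅ Extⁱ⁺¹(D(M), R)`: `Coker j` is `k`-torsionless, hence a `k`-th syzygy.
-/

variable {R}

/-- A projective resolution spelled out by linear maps, exactness being `range = ker`; unlike
`ProjectiveResolution` it can be shifted by forgetting its first term. -/
structure LinearProjectiveResolution (T : ModuleCat.{u} R) where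
  C : ℕ → ModuleCat.{u} R
  projective : ∀ n, Module.Projective R (C n)
  d : ∀ n, C (n + 1) ⟶ C n
  ε : C 0 ⟶ T
  surjective_ε : Function.Surjective ε
  range_d_zero : LinearMap.range (d 0).hom = LinearMap.ker ε.hom
  range_d_succ : ∀ n, LinearMap.range (d (n + 1)).hom = LinearMap.ker (d n).hom

namespace LinearProjectiveResolution

variable {T : ModuleCat.{u} R} (ρ : LinearProjectiveResolution T)

lemma d_comp_d (n : ℕ) : ρ.d (n + 1) ≫ ρ.d n = 0 := by
  ext x
  exact (ρ.range_d_succ n).le ⟨x, rfl⟩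

lemma d_comp_ε : ρ.d 0 ≫ ρ.ε = 0 := by
  ext x
  exact ρ.range_d_zero.le ⟨x, rfl⟩

noncomputable def complex : ChainComplex (ModuleCat.{u} R) ℕ :=
  ChainComplex.of ρ.C ρ.d ρ.d_comp_d

@[simp] lemma complex_d (n : ℕ) : ρ.complex.d (n + 1) n = ρ.d n := by
  simp [complex]

lemma complex_exactAt_succ (n : ℕ) : ρ.complex.ExactAt (n + 1) := by
  rw [HomologicalComplex.exactAt_iff' _ (n + 2) (n + 1) n (by simp) (by simp),
    ShortComplex.moduleCat_exact_iff_range_eq_ker]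
  change LinearMap.range (ρ.complex.d (n + 2) (n + 1)).hom =
    LinearMap.ker (ρ.complex.d (n + 1) n).hom
  rw [complex_d, complex_d]
  exact ρ.range_d_succ n

noncomputable def π : ρ.complex ⟶ (ChainComplex.single₀ (ModuleCat.{u} R)).obj T :=
  (ChainComplex.toSingle₀Equiv _ _).symm ⟨ρ.ε, by rw [complex_d]; exact ρ.d_comp_ε⟩

lemma π_f_zero : ρ.π.f 0 = ρ.ε :=
  ChainComplex.toSingle₀Equiv_symm_apply_f_zero _ _

noncomputable def toProjectiveResolution : ProjectiveResolution T where
  complex := ρ.complex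
  projective n := have := ρ.projective n; inferInstanceAs (Projective (ρ.C n))
  π := ρ.π
  quasiIso := ⟨fun n => by
    cases n with
    | zero =>
      rw [ChainComplex.quasiIsoAt₀_iff, ShortComplex.quasiIso_iff_of_zeros' _ rfl rfl rfl]
      refine ⟨?_, ?_⟩
      · rw [ShortComplex.moduleCat_exact_iff_range_eq_ker]
        change LinearMap.range (ρ.complex.d 1 0).hom = LinearMap.ker (ρ.π.f 0).hom
        rw [complex_d, π_f_zero]
        exact ρ.range_d_zero
      · change Epi (ρ.π.f 0)
        rw [π_f_zero]
        exact (ModuleCat.epi_iff_surjective _).2 ρ.surjective_ε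
    | succ n =>
      rw [quasiIsoAt_iff_exactAt' _ _ (ChainComplex.exactAt_succ_single_obj _ _)]
      exact ρ.complex_exactAt_succ n⟩

lemma subsingleton_extM_succ_iff (N : ModuleCat.{u} R) (n : ℕ) :
    Subsingleton (extM R T N (n + 1)) ↔
      ∀ φ : ρ.C (n + 1) ⟶ N, ρ.d (n + 1) ≫ φ = 0 → ∃ ψ : ρ.C n ⟶ N, ρ.d n ≫ ψ = φ := by
  rw [← ModuleCat.isZero_iff_subsingleton, extM,
    (ρ.toProjectiveResolution.isoExt (n + 1) N).isZero_iff,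
    ← HomologicalComplex.exactAt_iff_isZero_homology,
    HomologicalComplex.exactAt_iff' _ n (n + 1) (n + 2) (by simp) (by simp),
    ShortComplex.moduleCat_exact_iff]
  change (∀ φ : ρ.C (n + 1) ⟶ N, ρ.complex.d (n + 2) (n + 1) ≫ φ = 0 →
      ∃ ψ : ρ.C n ⟶ N, ρ.complex.d (n + 1) n ≫ ψ = φ) ↔ _
  rw [complex_d, complex_d]
  exact Iff.rfl

section Shift

variable {T' : ModuleCat.{u} R} (ε' : ρ.C 1 ⟶ T')

def shift (hε' : Function.Surjective ε')
    (hd : LinearMap.range (ρ.d 1).hom = LinearMap.ker ε'.hom) : LinearProjectiveResolution T' where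
  C n := ρ.C (n + 1)
  projective n := ρ.projective (n + 1)
  d n := ρ.d (n + 1)
  ε := ε'
  surjective_ε := hε'
  range_d_zero := hd
  range_d_succ n := ρ.range_d_succ (n + 1)

lemma subsingleton_extM_shift_iff (hε' : Function.Surjective ε')
    (hd : LinearMap.range (ρ.d 1).hom = LinearMap.ker ε'.hom) (N : ModuleCat.{u} R) (n : ℕ) :
    Subsingleton (extM R T' N (n + 1)) ↔ Subsingleton (extM R T N (n + 2)) := by
  rw [(ρ.shift ε' hε' hd).subsingleton_extM_succ_iff, ρ.subsingleton_extM_succ_iff]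
  rfl

end Shift

section Extend

variable {C₀ C₁ : ModuleCat.{u} R} (d₀ : C₁ ⟶ C₀)

/-- Stage `n` is `(C (n + 1), ker d n)`; the next module is free on that kernel. -/
noncomputable def extendStage : ℕ → Σ F : ModuleCat.{u} R, Submodule R F
  | 0 => ⟨C₁, LinearMap.ker d₀.hom⟩
  | n + 1 =>
    ⟨ModuleCat.of R ((extendStage n).2 →₀ R),
      LinearMap.ker (Finsupp.linearCombination R (Subtype.val : (extendStage n).2 → _))⟩

noncomputable def extendC : ℕ → ModuleCat.{u} R
  | 0 => C₀
  | n + 1 => (extendStage d₀ n).1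

noncomputable def extendD : ∀ n, extendC d₀ (n + 1) ⟶ extendC d₀ n
  | 0 => d₀
  | n + 1 =>
    ModuleCat.ofHom (Finsupp.linearCombination R (Subtype.val : (extendStage d₀ n).2 → _))

lemma range_extendD_succ (n : ℕ) :
    LinearMap.range (extendD d₀ (n + 1)).hom = (extendStage d₀ n).2 := by
  change
    LinearMap.range (Finsupp.linearCombination R (Subtype.val : (extendStage d₀ n).2 → _)) = _
  rw [Finsupp.range_linearCombination, Subtype.range_coe, Submodule.span_eq]

lemma ker_extendD (n : ℕ) : LinearMap.ker (extendD d₀ n).hom = (extendStage d₀ n).2 := by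
  cases n <;> rfl

noncomputable def extend [Module.Projective R C₀] [Module.Projective R C₁] (ε : C₀ ⟶ T)
    (hε : Function.Surjective ε) (hd₀ : LinearMap.range d₀.hom = LinearMap.ker ε.hom) :
    LinearProjectiveResolution T where
  C := extendC d₀
  projective
    | 0 => ‹_›
    | 1 => ‹_›
    | _ + 2 => inferInstanceAs (Module.Projective R (_ →₀ R))
  d := extendD d₀
  ε := ε
  surjective_ε := hε
  range_d_zero := hd₀
  range_d_succ n := (range_extendD_succ d₀ n).trans (ker_extendD d₀ n).symm

end Extend

end LinearProjectiveResolution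

lemma subsingleton_extM_of_linearEquiv {A B N : ModuleCat.{u} R} (e : A ≃ₗ[R] B) (i : ℕ)
    [h : Subsingleton (extM R A N i)] : Subsingleton (extM R B N i) :=
  @Equiv.subsingleton _ _
    (((Ext R (ModuleCat.{u} R) i).mapIso e.toModuleIso.op).app N).toLinearEquiv.toEquiv h

section Presentation

variable {P₁ P₀ M : Type u} [AddCommGroup P₁] [Module R P₁] [AddCommGroup P₀] [Module R P₀]
  [AddCommGroup M] [Module R M] {g : P₁ →ₗ[R] P₀} {f : P₀ →ₗ[R] M}

lemma range_dualMap_eq_ker_dualMap_of_exact (hex : Function.Exact g f)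
    (hf : Function.Surjective f) : LinearMap.range f.dualMap = LinearMap.ker g.dualMap := by
  rw [LinearMap.range_dualMap_eq_dualAnnihilator_ker_of_surjective f hf,
    LinearMap.ker_dualMap_eq_dualAnnihilator_range, hex.linearMap_ker_eq]

lemma injective_dualEval_of_exists_comp_dualMap_eq [Module.IsReflexive R P₁]
    [Module.IsReflexive R P₀] (hex : Function.Exact g f) (hf : Function.Surjective f)
    (hlift : ∀ φ : Module.Dual R (Module.Dual R P₀), (∀ ξ ∈ LinearMap.ker g.dualMap, φ ξ = 0) →
      ∃ ψ : Module.Dual R (Module.Dual R P₁), ψ ∘ₗ g.dualMap = φ) :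
    Function.Injective (Module.Dual.eval R M) := by
  rw [injective_iff_map_eq_zero]
  intro m hm
  obtain ⟨x, rfl⟩ := hf m
  have hx : ∀ ξ ∈ LinearMap.ker g.dualMap, Module.Dual.eval R P₀ x ξ = 0 := by
    intro ξ hξ
    rw [← range_dualMap_eq_ker_dualMap_of_exact hex hf] at hξ
    obtain ⟨φ, rfl⟩ := hξ
    exact LinearMap.congr_fun hm φ
  obtain ⟨ψ, hψ⟩ := hlift _ hx
  obtain ⟨y, rfl⟩ := (Module.bijective_dual_eval R P₁).2 ψ
  obtain rfl : x = g y := (Module.bijective_dual_eval R P₀).1 (LinearMap.ext fun ξ =>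
    (LinearMap.congr_fun hψ ξ).symm)
  exact hex.apply_apply_eq_zero y

end Presentation

lemma exists_injective_of_injective_dualEval {M : Type u} [AddCommGroup M] [Module R M]
    [Module.Finite R (Module.Dual R M)] (hM : Function.Injective (Module.Dual.eval R M)) :
    ∃ (n : ℕ) (j : M →ₗ[R] Module.Dual R (Fin n → R)),
      Function.Injective j ∧ Function.Surjective j.dualMap := by
  obtain ⟨n, s, hs⟩ := Module.Finite.exists_fin' R (Module.Dual R M)
  refine ⟨n, s.dualMap ∘ₗ Module.Dual.eval R M,
    (LinearMap.dualMap_injective_of_surjective hs).comp hM, fun φ => ?_⟩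
  obtain ⟨w, rfl⟩ := hs φ
  exact ⟨Module.Dual.eval R _ w, rfl⟩

abbrev auslanderTranspose {P₁ P₀ : Type u} [AddCommGroup P₁] [Module R P₁] [AddCommGroup P₀]
    [Module R P₀] (g : P₁ →ₗ[R] P₀) : ModuleCat.{u} R :=
  ModuleCat.of R (Module.Dual R P₁ ⧸ LinearMap.range g.dualMap)

section Transpose

variable {P₁ P₀ : Type u} [AddCommGroup P₁] [Module R P₁] [AddCommGroup P₀] [Module R P₀]
  [Module.Finite R P₁] [Module.Projective R P₁] [Module.Finite R P₀] [Module.Projective R P₀]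

noncomputable def auslanderTransposeResolution (g : P₁ →ₗ[R] P₀) :
    LinearProjectiveResolution (auslanderTranspose g) :=
  LinearProjectiveResolution.extend (C₀ := ModuleCat.of R (Module.Dual R P₁))
    (C₁ := ModuleCat.of R (Module.Dual R P₀)) (ModuleCat.ofHom g.dualMap)
    (ModuleCat.ofHom (LinearMap.range g.dualMap).mkQ) (Submodule.mkQ_surjective _)
    (Submodule.ker_mkQ _).symm

lemma exists_comp_dualMap_eq_of_subsingleton_extM_one (g : P₁ →ₗ[R] P₀)
    (h : Subsingleton (extM R (auslanderTranspose g) (ModuleCat.of R R) 1))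
    (φ : Module.Dual R (Module.Dual R P₀)) (hφ : ∀ ξ ∈ LinearMap.ker g.dualMap, φ ξ = 0) :
    ∃ ψ : Module.Dual R (Module.Dual R P₁), ψ ∘ₗ g.dualMap = φ := by
  let ρ := auslanderTransposeResolution g
  obtain ⟨ψ, hψ⟩ := (ρ.subsingleton_extM_succ_iff _ 0).1 h (ModuleCat.ofHom φ) <| by
    ext x
    exact hφ _ ((ρ.range_d_succ 0).le ⟨x, rfl⟩)
  exact ⟨ψ.hom, congrArg ModuleCat.Hom.hom hψ⟩

end Transpose

section Cokernel

variable {P₁ P₀ M F : Type u} [AddCommGroup P₁] [Module R P₁] [AddCommGroup P₀] [Module R P₀]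
  [AddCommGroup M] [Module R M] [AddCommGroup F] [Module R F]
  [Module.Finite R P₁] [Module.Projective R P₁] [Module.Finite R P₀] [Module.Projective R P₀]
  [Module.Finite R F] [Module.Projective R F] {g : P₁ →ₗ[R] P₀} {f : P₀ →ₗ[R] M}

lemma torsionless_cokernel_of_surjective_dualMap (hex : Function.Exact g f)
    (hf : Function.Surjective f) {j : M →ₗ[R] F} (hj : Function.Surjective j.dualMap) (k : ℕ)
    (hExt : ∀ i, 2 ≤ i → i ≤ k + 1 →
      Subsingleton (extM R (auslanderTranspose g) (ModuleCat.of R R) i)) :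
    Torsionless R k (ModuleCat.of R (F ⧸ LinearMap.range j)) := by
  have hrange : LinearMap.range (j ∘ₗ f).dualMap = LinearMap.ker g.dualMap := by
    rw [← LinearMap.dualMap_comp_dualMap, LinearMap.range_comp, LinearMap.range_eq_top.2 hj,
      Submodule.map_top, range_dualMap_eq_ker_dualMap_of_exact hex hf]
  have hexact : Function.Exact (j ∘ₗ f) (LinearMap.range j).mkQ := by
    rw [LinearMap.exact_iff, Submodule.ker_mkQ, LinearMap.range_comp, LinearMap.range_eq_top.2 hf,
      Submodule.map_top]
  refine ⟨auslanderTranspose (j ∘ₗ f), ⟨ModuleCat.of R P₀, ModuleCat.of R F, j ∘ₗ f,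
    (LinearMap.range j).mkQ, ‹_›, ‹_›, ‹_›, ‹_›, Submodule.mkQ_surjective _, hexact,
    ⟨LinearEquiv.refl R _⟩⟩, fun i hi hik => ?_⟩
  obtain ⟨m, rfl⟩ := Nat.exists_eq_add_of_le' hi
  refine ((auslanderTransposeResolution g).subsingleton_extM_shift_iff
    (ModuleCat.ofHom (LinearMap.range (j ∘ₗ f).dualMap).mkQ) (Submodule.mkQ_surjective _) ?_ _ m).2
    (hExt (m + 2) (by omega) (by omega))
  change _ = LinearMap.ker (LinearMap.range (j ∘ₗ f).dualMap).mkQ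
  rw [Submodule.ker_mkQ, hrange]
  exact (auslanderTransposeResolution g).range_d_succ 0

end Cokernel

theorem exists_embedding_torsionless_cokernel [IsNoetherianRing R] {k : ℕ} {M : ModuleCat.{u} R}
    (h : Torsionless R (k + 1) M) :
    ∃ (P : ModuleCat.{u} R) (j : M →ₗ[R] P), Module.Finite R P ∧ Module.Projective R P ∧
      Function.Injective j ∧ Torsionless R k (ModuleCat.of R (P ⧸ LinearMap.range j)) := by
  obtain ⟨D, ⟨P₁, P₀, g, f, _, _, _, _, hf, hex, ⟨e⟩⟩, hD⟩ := h
  have hExt (i : ℕ) (hi : 1 ≤ i) (hik : i ≤ k + 1) :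
      Subsingleton (extM R (auslanderTranspose g) (ModuleCat.of R R) i) :=
    have := hD i hi hik
    subsingleton_extM_of_linearEquiv e i
  have hM : Function.Injective (Module.Dual.eval R M) :=
    injective_dualEval_of_exists_comp_dualMap_eq hex hf
      (exists_comp_dualMap_eq_of_subsingleton_extM_one g (hExt 1 le_rfl (by omega)))
  have : Module.Finite R (Module.Dual R M) :=
    Module.Finite.of_injective f.dualMap (LinearMap.dualMap_injective_of_surjective hf)
  obtain ⟨n, j, hj, hj'⟩ := exists_injective_of_injective_dualEval hM
  exact ⟨ModuleCat.of R (Module.Dual R (Fin n → R)), j, inferInstance, inferInstance, hj,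
    torsionless_cokernel_of_surjective_dualMap hex hf hj' k fun i hi hik => hExt i (by omega) hik⟩

theorem isSyzygy_of_torsionless_general
    (R : Type u) [CommRing R] [IsNoetherianRing R]
    (M : ModuleCat.{u} R) (k : ℕ)
    (h : Torsionless R k M) : IsSyzygy R k M := by
  induction k generalizing M with
  | zero => trivial
  | succ k ih =>
    obtain ⟨P, j, hP, hP', hj, hcoker⟩ := exists_embedding_torsionless_cokernel h
    exact ⟨P, j, hP, hP', hj, ih _ hcoker⟩

/-- Every `k`-torsionless finitely generated module is a `k`-th syzygy. -/
theorem isSyzygy_of_torsionless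
    (R : Type u) [CommRing R] [IsNoetherianRing R]
    (M : ModuleCat.{u} R) [Module.Finite R M] (k : ℕ)
    (h : Torsionless R k M) : IsSyzygy R k M :=
  isSyzygy_of_torsionless_general R M k h
end

section
/- Over a commutative Noetherian ring R, if a finitely generated module M is a k-th syzygy, then M satisfies condition S̃_k: depth(M_P) ≥ min{k, depth(R_P)} for all primes P. -/
open CategoryTheory

universe u

variable (R : Type u) [CommRing R]

/-!
Localization is exact and preserves finite projective modules, so `M_P` is again a `k`-th
syzygy over `R_P`. Over any commutative ring, `Ext^•(X, -)` is the cohomology of `Hom(π, -)`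
for a projective resolution `π` of `X`, so it has long exact sequences in the second variable.
If `Ext^j(X, R) = 0` for `j ≤ i`, the same holds for finite projectives (retracts of `Rⁿ`), and
dimension shifting along `0 → N → F → N' → 0` gives `Ext^i(X, N) = 0` for every `k`-th syzygy
`N` with `i < k`. With `X` the residue field of `R_P`, this is the inequality on depths.
-/

open CategoryTheory Limits

namespace ChainComplex

variable (A : Type*) [Ring A] {C : Type*} [Category C] [Abelian C] [Linear A C]

def linearYonedaObjMap (K : ChainComplex C ℕ) {Y Y' : C} (h : Y ⟶ Y') :
    K.linearYonedaObj A Y ⟶ K.linearYonedaObj A Y' where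
  f j := ModuleCat.ofHom (Linear.rightComp A (K.X j) h)
  comm' i j _ := by
    ext φ
    exact (Category.assoc _ _ _).symm

def linearYonedaShortComplex (K : ChainComplex C ℕ) (S : ShortComplex C) :
    ShortComplex (CochainComplex (ModuleCat A) ℕ) :=
  ShortComplex.mk (K.linearYonedaObjMap A S.f) (K.linearYonedaObjMap A S.g) (by
    ext j (φ : K.X j ⟶ S.X₁)
    show (φ ≫ S.f) ≫ S.g = 0
    rw [Category.assoc, S.zero, comp_zero])

lemma shortExact_linearYonedaShortComplex (K : ChainComplex C ℕ)
    (hK : ∀ j, Projective (K.X j)) {S : ShortComplex C} (hS : S.ShortExact) :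
    (K.linearYonedaShortComplex A S).ShortExact := by
  have := hS.mono_f
  have := hS.epi_g
  refine HomologicalComplex.shortExact_of_degreewise_shortExact _ fun j ↦ ?_
  refine ModuleCat.shortComplex_shortExact _ ?_ ?_ ?_
  · intro φ
    refine ⟨fun hφ ↦ ⟨hS.exact.liftFromProjective φ hφ,
      hS.exact.liftFromProjective_comp φ hφ⟩, ?_⟩
    rintro ⟨ψ : K.X j ⟶ S.X₁, rfl⟩
    show (ψ ≫ S.f) ≫ S.g = 0
    rw [Category.assoc, S.zero, comp_zero]
  · exact fun φ ψ h ↦ (cancel_mono S.f).1 h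
  · exact fun φ ↦ ⟨Projective.factorThru φ S.g, Projective.factorThru_comp φ S.g⟩

end ChainComplex

lemma CochainComplex.isZero_homology_zero_of_mono {C : Type*} [Category C] [HasZeroMorphisms C]
    {K L : CochainComplex C ℕ} [K.HasHomology 0] [L.HasHomology 0] (φ : K ⟶ L)
    (hφ : Mono (φ.f 0)) (h : IsZero (L.homology 0)) : IsZero (K.homology 0) := by
  have : Mono (HomologicalComplex.homologyMap φ 0 ≫ L.isoHomologyπ₀.inv) := by
    rw [CochainComplex.isoHomologyπ₀_inv_naturality]; infer_instance
  have := mono_of_mono (HomologicalComplex.homologyMap φ 0) L.isoHomologyπ₀.inv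
  exact h.of_mono (HomologicalComplex.homologyMap φ 0)

lemma CategoryTheory.ProjectiveResolution.isZero_extM_iff {A : Type u} [CommRing A]
    {X : ModuleCat.{u} A} (π : ProjectiveResolution X) (Y : ModuleCat.{u} A) (i : ℕ) :
    IsZero (extM A X Y i) ↔ IsZero ((π.complex.linearYonedaObj A Y).homology i) :=
  ⟨fun h ↦ h.of_iso (π.isoExt i Y).symm, fun h ↦ h.of_iso (π.isoExt i Y)⟩

namespace CategoryTheory.ShortComplex.ShortExact

variable {A : Type u} [CommRing A] {X : ModuleCat.{u} A} {S : ShortComplex (ModuleCat.{u} A)}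

lemma isZero_extM_X₂ (hS : S.ShortExact) {i : ℕ} (h₁ : IsZero (extM A X S.X₁ i))
    (h₃ : IsZero (extM A X S.X₃ i)) : IsZero (extM A X S.X₂ i) := by
  let π : ProjectiveResolution X := HasProjectiveResolution.out.some
  rw [π.isZero_extM_iff] at h₁ h₃ ⊢
  exact ((π.complex.shortExact_linearYonedaShortComplex A π.projective hS).homology_exact₂ i
    ).isZero_X₂ (h₁.eq_of_src _ _) (h₃.eq_of_tgt _ _)

lemma isZero_extM_X₁_succ (hS : S.ShortExact) {i : ℕ} (h₃ : IsZero (extM A X S.X₃ i))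
    (h₂ : IsZero (extM A X S.X₂ (i + 1))) : IsZero (extM A X S.X₁ (i + 1)) := by
  let π : ProjectiveResolution X := HasProjectiveResolution.out.some
  rw [π.isZero_extM_iff] at h₃ h₂ ⊢
  exact ((π.complex.shortExact_linearYonedaShortComplex A π.projective hS).homology_exact₁ i
    (i + 1) rfl).isZero_X₂ (h₃.eq_of_src _ _) (h₂.eq_of_tgt _ _)

lemma isZero_extM_X₁_zero (hS : S.ShortExact) (h₂ : IsZero (extM A X S.X₂ 0)) :
    IsZero (extM A X S.X₁ 0) := by
  let π : ProjectiveResolution X := HasProjectiveResolution.out.some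
  rw [π.isZero_extM_iff] at h₂ ⊢
  have := hS.mono_f
  exact CochainComplex.isZero_homology_zero_of_mono (π.complex.linearYonedaShortComplex A S).f
    ((ModuleCat.mono_iff_injective _).2 fun φ ψ h ↦ (cancel_mono S.f).1 h) h₂

end CategoryTheory.ShortComplex.ShortExact

section ExtVanishing

variable {A : Type u} [CommRing A] {X : ModuleCat.{u} A} {i : ℕ}

lemma isZero_extM_of_retract {Y Y' : ModuleCat.{u} A} (r : Retract Y Y')
    (h : IsZero (extM A X Y' i)) : IsZero (extM A X Y i) :=
  @IsZero.of_mono _ _ _ _ _ _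
    (r.map ((Ext A (ModuleCat.{u} A) i).obj (Opposite.op X))).splitMono.mono h

lemma isZero_extM_pi_fin (h : IsZero (extM A X (ModuleCat.of A A) i)) :
    ∀ n : ℕ, IsZero (extM A X (ModuleCat.of A (Fin n → A)) i)
  | 0 => isZero_extM_of_retract ((ModuleCat.isZero_of_subsingleton _).retract _) h
  | n + 1 => by
    have hS := ModuleCat.shortComplexOfConj_shortExact (LinearEquiv.refl A A)
      (Fin.consLinearEquiv A fun _ : Fin (n + 1) ↦ A).symm (LinearEquiv.refl A (Fin n → A))
      _ _ Function.Exact.inl_snd LinearMap.inl_injective LinearMap.snd_surjective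
    exact hS.isZero_extM_X₂ h (isZero_extM_pi_fin h n)

lemma isZero_extM_of_projective (h : IsZero (extM A X (ModuleCat.of A A) i))
    (P : ModuleCat.{u} A) [Module.Finite A P] [Module.Projective A P] :
    IsZero (extM A X P i) := by
  obtain ⟨n, s, hs⟩ := Module.Finite.exists_fin' A P
  obtain ⟨σ, hσ⟩ := Module.projective_lifting_property s LinearMap.id hs
  exact isZero_extM_of_retract ⟨ModuleCat.ofHom σ, ModuleCat.ofHom s, ModuleCat.hom_ext hσ⟩
    (isZero_extM_pi_fin h n)

lemma isZero_extM_of_isSyzygy (X : ModuleCat.{u} A) :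
    ∀ {k : ℕ} {N : ModuleCat.{u} A}, IsSyzygy A k N → ∀ {i : ℕ}, i < k →
      (∀ j ≤ i, IsZero (extM A X (ModuleCat.of A A) j)) → IsZero (extM A X N i)
  | k + 1, N, ⟨P, f, _, _, hf, hsyz⟩, i, hik, hA => by
    have hS := ModuleCat.shortComplex_shortExact
      (ModuleCat.shortComplexOfCompEqZero f (LinearMap.range f).mkQ (LinearMap.range_mkQ_comp f))
      (LinearMap.exact_map_mkQ_range f) hf (Submodule.mkQ_surjective _)
    have hP (j) (hj : j ≤ i) : IsZero (extM A X P j) := isZero_extM_of_projective (hA j hj) P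
    cases i with
    | zero => exact hS.isZero_extM_X₁_zero (hP 0 le_rfl)
    | succ i =>
      exact hS.isZero_extM_X₁_succ
        (isZero_extM_of_isSyzygy X hsyz (by omega) fun j hj ↦ hA j (by omega)) (hP _ le_rfl)

end ExtVanishing

open TensorProduct in
variable {R} in
lemma IsSyzygy.of_isLocalizedModule (S : Type u) [CommRing S] [Algebra R S] (p : Submonoid R)
    [IsLocalization p S] :
    ∀ {k : ℕ} {M N : Type u} [AddCommGroup M] [Module R M] [AddCommGroup N] [Module R N]
      [Module S N] [IsScalarTower R S N] (g : M →ₗ[R] N) [IsLocalizedModule p g],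
      IsSyzygy R k (ModuleCat.of R M) → IsSyzygy S k (ModuleCat.of S N)
  | 0, _, _, _, _, _, _, _, _, _, _, _ => trivial
  | k + 1, M, N, _, _, _, _, _, _, g, _, ⟨P, f, _, _, hf, hsyz⟩ => by
    let gP := TensorProduct.mk R S P 1
    let f' := (IsLocalizedModule.map p g gP f).extendScalarsOfIsLocalization p S
    refine ⟨ModuleCat.of S (S ⊗[R] P), f', inferInstance, inferInstance,
      IsLocalizedModule.map_injective p g gP f hf, ?_⟩
    have := IsSyzygy.of_isLocalizedModule S p
      ((LinearMap.range f).toLocalizedQuotient' S p gP) hsyz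
    rwa [LinearMap.localized'_range_eq_range_localizedMap S p g gP f] at this

variable {R} in
lemma le_rdepth_iff [IsLocalRing R] {N : ModuleCat.{u} R} {m : ℕ∞} :
    m ≤ rdepth R N ↔ ∀ i : ℕ, (i : ℕ∞) < m →
      IsZero (extM R (ModuleCat.of R (IsLocalRing.ResidueField R)) N i) := by
  simp only [ModuleCat.isZero_iff_subsingleton]
  refine ⟨fun h i hi ↦ ?_, fun h ↦ le_sInf ?_⟩
  · by_contra hne
    exact (h.trans (sInf_le ⟨i, rfl, hne⟩)).not_gt hi
  · rintro _ ⟨i, rfl, hne⟩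
    by_contra hlt
    exact hne (h i (not_le.1 hlt))

theorem depth_localization_ge_of_isSyzygy_general
    (R : Type u) [CommRing R]
    (M : ModuleCat.{u} R) (k : ℕ)
    (h : IsSyzygy R k M) :
    ∀ (P : Ideal R) (_ : P.IsPrime),
      min (k : ℕ∞) (rdepth (Localization.AtPrime P)
          (ModuleCat.of (Localization.AtPrime P) (Localization.AtPrime P))) ≤
        rdepth (Localization.AtPrime P)
          (ModuleCat.of (Localization.AtPrime P) (LocalizedModule P.primeCompl M)) := by
  intro P _
  have hM := h.of_isLocalizedModule (Localization.AtPrime P) P.primeCompl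
    (LocalizedModule.mkLinearMap P.primeCompl M)
  refine le_rdepth_iff.2 fun i hi ↦ isZero_extM_of_isSyzygy _ hM ?_ fun j hj ↦ ?_
  · exact_mod_cast (lt_min_iff.1 hi).1
  · exact le_rdepth_iff.1 le_rfl j ((Nat.cast_le.2 hj).trans_lt (lt_min_iff.1 hi).2)

/-- A `k`-th syzygy satisfies `S̃_k`: for every prime `P`,
`depth M_P ≥ min {k, depth R_P}`. -/
theorem depth_localization_ge_of_isSyzygy
    (R : Type u) [CommRing R] [IsNoetherianRing R]
    (M : ModuleCat.{u} R) [Module.Finite R M] (k : ℕ)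
    (h : IsSyzygy R k M) :
    ∀ (P : Ideal R) (_ : P.IsPrime),
      min (k : ℕ∞) (rdepth (Localization.AtPrime P)
          (ModuleCat.of (Localization.AtPrime P) (Localization.AtPrime P))) ≤
        rdepth (Localization.AtPrime P)
          (ModuleCat.of (Localization.AtPrime P) (LocalizedModule P.primeCompl M)) :=
  depth_localization_ge_of_isSyzygy_general R M k h
end
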